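/- arXiv:2507.21594 — 2 statements merged into one kernel-verified Lean document; each statement's English description precedes it below -/
import Mathlib

section
/- With the setup of two commuting squares Q ∘ φ = ψ ∘ P, if P̃(u; z) = P(u) + Σ zk·wk is surjective, φ restricts to an isomorphism ker P → ker Q, and ψ induces an isomorphism coker P → coker Q, then the operator Q̃(v; z) = Q(v) + Σ zk·ψ(wk) from H2 ⊕ ℂ^l to H2' is surjective. -/
/-! The cokernel isomorphism says that `range Q + range ψ = H2'`. Both summands lie in the range
of `Q̃`: the first obviously, the second because `ψ ∘ P̃ = Q̃ ∘ (φ × id)` and `P̃` is onto. -/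

/-- The augmented operator `P̃(u; z) = P u + ∑ zₖ • wₖ` on `H1 ⊕ ℂˡ`. -/
noncomputable def augmentedOp {H H' : Type*}
    [NormedAddCommGroup H] [InnerProductSpace ℂ H]
    [NormedAddCommGroup H'] [InnerProductSpace ℂ H'] {l : ℕ}
    (P : H →L[ℂ] H') (w : Fin l → H') : (H × (Fin l → ℂ)) →ₗ[ℂ] H' :=
  (P : H →ₗ[ℂ] H') ∘ₗ LinearMap.fst ℂ H (Fin l → ℂ) +
    (Fintype.linearCombination ℂ w) ∘ₗ LinearMap.snd ℂ H (Fin l → ℂ)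

open LinearMap

theorem Submodule.sup_range_eq_top_of_surjective_liftQ {R N N' : Type*} [Ring R]
    [AddCommGroup N] [Module R N] [AddCommGroup N'] [Module R N']
    (p : Submodule R N) (q : Submodule R N') (β : N →ₗ[R] N')
    (h : p ≤ ker (q.mkQ ∘ₗ β)) (hs : Function.Surjective (p.liftQ (q.mkQ ∘ₗ β) h)) :
    q ⊔ range β = ⊤ := by
  rwa [← Submodule.map_mkQ_eq_top, ← range_comp, ← Submodule.range_liftQ p _ h, range_eq_top]

section augmentedOp

variable {H H' K K' : Type*}
  [NormedAddCommGroup H] [InnerProductSpace ℂ H] [NormedAddCommGroup H'] [InnerProductSpace ℂ H']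
  [NormedAddCommGroup K] [InnerProductSpace ℂ K] [NormedAddCommGroup K'] [InnerProductSpace ℂ K']
  {l : ℕ}

theorem range_le_range_augmentedOp (Q : K →L[ℂ] K') (w : Fin l → K') :
    range (Q : K →ₗ[ℂ] K') ≤ range (augmentedOp Q w) := by
  rintro _ ⟨v, rfl⟩
  exact ⟨(v, 0), by simp [augmentedOp]⟩

theorem comp_augmentedOp_eq_augmentedOp_comp_prodMap (P : H →L[ℂ] H') (Q : K →L[ℂ] K')
    (φ : H →L[ℂ] K) (ψ : H' →L[ℂ] K') (hcomm : ∀ u, Q (φ u) = ψ (P u)) (w : Fin l → H') :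
    (ψ : H' →ₗ[ℂ] K') ∘ₗ augmentedOp P w =
      augmentedOp Q (fun k => ψ (w k)) ∘ₗ
        (φ : H →ₗ[ℂ] K).prodMap (LinearMap.id (M := Fin l → ℂ)) := by
  refine LinearMap.ext fun ⟨u, z⟩ => ?_
  simp [augmentedOp, Fintype.linearCombination_apply, hcomm]

end augmentedOp

theorem stmt3_general
    {H1 H1' H2 H2' : Type*}
    [NormedAddCommGroup H1] [InnerProductSpace ℂ H1]
    [NormedAddCommGroup H1'] [InnerProductSpace ℂ H1']
    [NormedAddCommGroup H2] [InnerProductSpace ℂ H2]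
    [NormedAddCommGroup H2'] [InnerProductSpace ℂ H2']
    (P : H1 →L[ℂ] H1') (Q : H2 →L[ℂ] H2')
    (φ : H1 →L[ℂ] H2) (ψ : H1' →L[ℂ] H2')
    (hcomm : ∀ u : H1, Q (φ u) = ψ (P u))
    (hcoker : LinearMap.range (P : H1 →ₗ[ℂ] H1') ≤
      LinearMap.ker ((LinearMap.range (Q : H2 →ₗ[ℂ] H2')).mkQ ∘ₗ (ψ : H1' →ₗ[ℂ] H2')))
    (hcoker_iso : Function.Bijective
      (Submodule.liftQ (LinearMap.range (P : H1 →ₗ[ℂ] H1'))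
        ((LinearMap.range (Q : H2 →ₗ[ℂ] H2')).mkQ ∘ₗ (ψ : H1' →ₗ[ℂ] H2')) hcoker))
    {l : ℕ} (w : Fin l → H1')
    (hPt : Function.Surjective (augmentedOp P w)) :
    Function.Surjective (augmentedOp Q (fun k => ψ (w k))) := by
  rw [← range_eq_top, eq_top_iff,
    ← Submodule.sup_range_eq_top_of_surjective_liftQ _ _ _ hcoker hcoker_iso.2]
  refine sup_le (range_le_range_augmentedOp Q _) ?_
  calc range (ψ : H1' →ₗ[ℂ] H2')
      = range ((ψ : H1' →ₗ[ℂ] H2') ∘ₗ augmentedOp P w) := by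
        rw [range_comp, range_eq_top.2 hPt, Submodule.map_top]
    _ = range (augmentedOp Q (fun k => ψ (w k)) ∘ₗ
          (φ : H1 →ₗ[ℂ] H2).prodMap (LinearMap.id (M := Fin l → ℂ))) := by
        rw [comp_augmentedOp_eq_augmentedOp_comp_prodMap P Q φ ψ hcomm]
    _ ≤ range (augmentedOp Q (fun k => ψ (w k))) := range_comp_le_range _ _

/-- If the square `Q ∘ φ = ψ ∘ P` commutes, `P̃` is surjective and the induced maps
on kernels and cokernels are isomorphisms, then
`Q̃(v; z) = Q v + ∑ zₖ • ψ(wₖ)` is surjective. -/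
theorem stmt3
    {H1 H1' H2 H2' : Type*}
    [NormedAddCommGroup H1] [InnerProductSpace ℂ H1] [CompleteSpace H1]
    [NormedAddCommGroup H1'] [InnerProductSpace ℂ H1'] [CompleteSpace H1']
    [NormedAddCommGroup H2] [InnerProductSpace ℂ H2] [CompleteSpace H2]
    [NormedAddCommGroup H2'] [InnerProductSpace ℂ H2'] [CompleteSpace H2']
    (P : H1 →L[ℂ] H1') (Q : H2 →L[ℂ] H2')
    (φ : H1 →L[ℂ] H2) (ψ : H1' →L[ℂ] H2')
    -- P and Q are Fredholm:
    [FiniteDimensional ℂ (LinearMap.ker (P : H1 →ₗ[ℂ] H1'))]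
    [FiniteDimensional ℂ (H1' ⧸ LinearMap.range (P : H1 →ₗ[ℂ] H1'))]
    [FiniteDimensional ℂ (LinearMap.ker (Q : H2 →ₗ[ℂ] H2'))]
    [FiniteDimensional ℂ (H2' ⧸ LinearMap.range (Q : H2 →ₗ[ℂ] H2'))]
    (hcomm : ∀ u : H1, Q (φ u) = ψ (P u))
    (hker : ∀ u ∈ LinearMap.ker (P : H1 →ₗ[ℂ] H1'),
      (φ : H1 →ₗ[ℂ] H2) u ∈ LinearMap.ker (Q : H2 →ₗ[ℂ] H2'))
    (hcoker : LinearMap.range (P : H1 →ₗ[ℂ] H1') ≤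
      LinearMap.ker ((LinearMap.range (Q : H2 →ₗ[ℂ] H2')).mkQ ∘ₗ (ψ : H1' →ₗ[ℂ] H2')))
    (hker_iso : Function.Bijective ((φ : H1 →ₗ[ℂ] H2).restrict hker))
    (hcoker_iso : Function.Bijective
      (Submodule.liftQ (LinearMap.range (P : H1 →ₗ[ℂ] H1'))
        ((LinearMap.range (Q : H2 →ₗ[ℂ] H2')).mkQ ∘ₗ (ψ : H1' →ₗ[ℂ] H2')) hcoker))
    {l : ℕ} (w : Fin l → H1')
    (hPt : Function.Surjective (augmentedOp P w)) :
    Function.Surjective (augmentedOp Q (fun k => ψ (w k))) :=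
  stmt3_general P Q φ ψ hcomm hcoker hcoker_iso w hPt
end

section
/- Let ξ : ℝ² → ℝ be smooth with ε ≤ ξ(x,y) ≤ (y² + r²)/(1+ε) for all (x,y), where ε, r > 0. Then any solution f of f' (s) = ξ(s, f(s)) with f(0) = 0, defined on [0, a] with a < l/2 where r = π(1+ε)/l, satisfies ε·s ≤ f(s) ≤ r·tan(πs/l) for all s ∈ [0, a]. -/
open Real

/-- Key comparison with the shifted barrier `s ↦ r * tan (k * s)` for `k > r / (1+ε)`. -/
lemma stmt7_key (ε r a : ℝ) (hε : 0 < ε) (hr0 : 0 < r) (ha : 0 ≤ a)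
    (k : ℝ) (hk0 : 0 < k) (hk : r / (1 + ε) < k) (hka : k * a < π / 2)
    (ξ : ℝ × ℝ → ℝ)
    (hbd : ∀ x y : ℝ, ξ (x, y) ≤ (y ^ 2 + r ^ 2) / (1 + ε))
    (f : ℝ → ℝ) (hf0 : f 0 = 0)
    (hf : ∀ s ∈ Set.Icc (0 : ℝ) a, HasDerivAt f (ξ (s, f s)) s) :
    ∀ s ∈ Set.Icc (0 : ℝ) a, f s ≤ r * Real.tan (k * s) := by
  have hε1 : (0:ℝ) < 1 + ε := by linarith
  have hcos : ∀ x ∈ Set.Icc (0:ℝ) a, 0 < Real.cos (k * x) := by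
    intro x hx
    apply Real.cos_pos_of_mem_Ioo
    constructor
    · have : 0 ≤ k * x := mul_nonneg hk0.le hx.1
      linarith [Real.pi_pos]
    · calc k * x ≤ k * a := by nlinarith [hx.2]
        _ < π / 2 := hka
  have hB' : ∀ x ∈ Set.Icc (0:ℝ) a,
      HasDerivAt (fun s => r * Real.tan (k * s))
        (r * (1 / Real.cos (k * x) ^ 2 * (k * 1))) x := by
    intro x hx
    exact ((Real.hasDerivAt_tan (hcos x hx).ne').comp x
      ((hasDerivAt_id x).const_mul k)).const_mul r
  have hcontf : ContinuousOn f (Set.Icc 0 a) :=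
    fun s hs => (hf s hs).continuousAt.continuousWithinAt
  have hfd : ∀ x ∈ Set.Ico (0:ℝ) a, HasDerivWithinAt f (ξ (x, f x)) (Set.Ici x) x :=
    fun x hx => (hf x (Set.Ico_subset_Icc_self hx)).hasDerivWithinAt
  have hBcont : ContinuousOn (fun s => r * Real.tan (k * s)) (Set.Icc 0 a) :=
    fun x hx => (hB' x hx).continuousAt.continuousWithinAt
  have hBd : ∀ x ∈ Set.Ico (0:ℝ) a, HasDerivWithinAt (fun s => r * Real.tan (k * s))
      (r * (1 / Real.cos (k * x) ^ 2 * (k * 1))) (Set.Ici x) x :=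
    fun x hx => (hB' x (Set.Ico_subset_Icc_self hx)).hasDerivWithinAt
  have ha0 : f 0 ≤ r * Real.tan (k * 0) := by simp [hf0]
  have bound : ∀ x ∈ Set.Ico (0:ℝ) a, f x = r * Real.tan (k * x) →
      ξ (x, f x) < r * (1 / Real.cos (k * x) ^ 2 * (k * 1)) := by
    intro x hx heq
    have hc := hcos x (Set.Ico_subset_Icc_self hx)
    have htan : (1 : ℝ) / Real.cos (k * x) ^ 2 = 1 + Real.tan (k * x) ^ 2 := by
      rw [one_div, ← Real.inv_one_add_tan_sq hc.ne', inv_inv]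
    have hbd' := hbd x (f x)
    rw [htan]
    set t := Real.tan (k * x) with ht
    rw [heq] at hbd' ⊢
    calc ξ (x, r * t) ≤ ((r * t) ^ 2 + r ^ 2) / (1 + ε) := hbd'
      _ < r * ((1 + t ^ 2) * (k * 1)) := by
          rw [div_lt_iff₀ hε1]
          have h1 : r / (1 + ε) < k := hk
          rw [div_lt_iff₀ hε1] at h1
          nlinarith [mul_pos (mul_pos (sub_pos.2 h1) hr0) (show (0:ℝ) < 1 + t ^ 2 by nlinarith [sq_nonneg t])]
  exact fun s hs =>
    image_le_of_deriv_right_lt_deriv_boundary' hcontf hfd ha0 hBcont hBd bound hs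

/-- Comparison estimate `ε·s ≤ f(s) ≤ r·tan(πs/l)` for solutions of `f' = ξ(s, f)`. -/
theorem stmt7 (ε l r a : ℝ) (hε : 0 < ε) (hl : 0 < l) (hr0 : 0 < r)
    (hr : r = π * (1 + ε) / l) (ha : 0 ≤ a) (hal : a < l / 2)
    (ξ : ℝ × ℝ → ℝ) (hξ : ContDiff ℝ (⊤ : ℕ∞) ξ)
    (hbd : ∀ x y : ℝ, ε ≤ ξ (x, y) ∧ ξ (x, y) ≤ (y ^ 2 + r ^ 2) / (1 + ε))
    (f : ℝ → ℝ) (hf0 : f 0 = 0)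
    (hf : ∀ s ∈ Set.Icc (0 : ℝ) a, HasDerivAt f (ξ (s, f s)) s) :
    ∀ s ∈ Set.Icc (0 : ℝ) a, ε * s ≤ f s ∧ f s ≤ r * Real.tan (π * s / l) := by
  have hε1 : (0:ℝ) < 1 + ε := by linarith
  have hrl : r / (1 + ε) = π / l := by
    rw [hr]; field_simp
  -- Lower bound
  have lower : ∀ ⦃s⦄, s ∈ Set.Icc (0:ℝ) a → ε * s ≤ f s := by
    apply image_le_of_deriv_right_le_deriv_boundary
      (f := fun s => ε * s) (f' := fun _ => ε)
      (B := f) (B' := fun x => ξ (x, f x))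
    · exact (continuous_const.mul continuous_id).continuousOn
    · intro x _
      exact ((hasDerivAt_id x).const_mul ε).hasDerivWithinAt.congr_deriv (mul_one ε)
    · simp [hf0]
    · intro s hs; exact (hf s hs).continuousAt.continuousWithinAt
    · intro x hx
      exact (hf x (Set.Ico_subset_Icc_self hx)).hasDerivWithinAt
    · intro x _; exact (hbd x (f x)).1
  -- Upper bound via limit over barriers with k = π(1+c)/l, c → 0⁺
  intro s hs
  refine ⟨lower hs, ?_⟩
  have hupper : ∀ c : ℝ, 0 < c → (1 + c) * a < l / 2 →
      f s ≤ r * Real.tan (π * (1 + c) / l * s) := by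
    intro c hc hca
    have hk0 : 0 < π * (1 + c) / l :=
      div_pos (mul_pos Real.pi_pos (by linarith)) hl
    have hk : r / (1 + ε) < π * (1 + c) / l := by
      rw [hrl]
      rw [div_lt_div_iff₀ hl hl]
      nlinarith [Real.pi_pos, mul_pos (mul_pos Real.pi_pos hc) hl]
    have hka : π * (1 + c) / l * a < π / 2 := by
      rw [div_mul_eq_mul_div, div_lt_div_iff₀ hl (by norm_num : (0:ℝ) < 2)]
      have := Real.pi_pos
      nlinarith
    exact stmt7_key ε r a hε hr0 ha _ hk0 hk hka ξ
      (fun x y => (hbd x y).2) f hf0 hf s hs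
  -- take the limit c → 0⁺
  have harg : Real.cos (π * (1 + 0) / l * s) ≠ 0 := by
    apply ne_of_gt
    apply Real.cos_pos_of_mem_Ioo
    have hπ := Real.pi_pos
    constructor
    · have : 0 ≤ π * (1 + 0) / l * s := mul_nonneg (by positivity) hs.1
      linarith
    · rw [div_mul_eq_mul_div, div_lt_div_iff₀ hl (by norm_num : (0:ℝ) < 2)]
      nlinarith [hs.2, hs.1]
  have hinner : ContinuousAt (fun c : ℝ => π * (1 + c) / l * s) 0 := by fun_prop
  have hcont : ContinuousAt (fun c : ℝ => r * Real.tan (π * (1 + c) / l * s)) 0 :=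
    (ContinuousAt.comp (x := (0:ℝ)) (f := fun c : ℝ => π * (1 + c) / l * s)
      (Real.continuousAt_tan.2 harg) hinner).const_mul r
  have hev : ∀ᶠ c in nhdsWithin (0:ℝ) (Set.Ioi 0),
      f s ≤ r * Real.tan (π * (1 + c) / l * s) := by
    have hts : Filter.Tendsto (fun c : ℝ => (1 + c) * a) (nhds 0) (nhds ((1 + 0) * a)) :=
      (((continuous_const.add continuous_id).mul continuous_const).tendsto 0)
    have h1 : ∀ᶠ c in nhds (0:ℝ), (1 + c) * a < l / 2 :=
      hts.eventually_lt_const (by linarith : (1 + (0:ℝ)) * a < l / 2)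
    filter_upwards [h1.filter_mono nhdsWithin_le_nhds, self_mem_nhdsWithin] with c hc1 hc2
    exact hupper c hc2 hc1
  have hlim := ge_of_tendsto (hcont.continuousWithinAt.tendsto) hev
  have heq : π * (1 + 0) / l * s = π * s / l := by ring
  rwa [heq] at hlim
end
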